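/- arXiv:2112.11351 — 3 statements merged into one kernel-verified Lean document; each statement's English description precedes it below -/
import Mathlib

section
/- Let x_1, ..., x_n be a sequence of n pairwise distinct natural numbers. Then it has a subsequence of length at least n/5 such that all elements of the subsequence lie in the closed interval whose endpoints are the first and the last element of that subsequence. -/
private def goodSet {n : ℕ} (x : Fin n → ℕ) (a b : Fin n) : Finset (Fin n) :=
  Finset.univ.filter fun i => a ≤ i ∧ i ≤ b ∧ min (x a) (x b) ≤ x i ∧ x i ≤ max (x a) (x b)

private lemma mem_goodSet {n : ℕ} (x : Fin n → ℕ) (a b i : Fin n) :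
    i ∈ goodSet x a b ↔
      a ≤ i ∧ i ≤ b ∧ min (x a) (x b) ≤ x i ∧ x i ≤ max (x a) (x b) := by
  simp [goodSet]

private lemma aux {n : ℕ} (x : Fin n → ℕ) (a b : Fin n) (hab : a ≤ b)
    (hcard : n ≤ 5 * (goodSet x a b).card) :
    ∃ (k : ℕ) (hk : 0 < k) (i : Fin k → Fin n),
      n ≤ 5 * k ∧ StrictMono i ∧
      ∀ j : Fin k,
        min (x (i ⟨0, hk⟩)) (x (i ⟨k - 1, Nat.sub_lt hk Nat.one_pos⟩)) ≤ x (i j) ∧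
        x (i j) ≤ max (x (i ⟨0, hk⟩)) (x (i ⟨k - 1, Nat.sub_lt hk Nat.one_pos⟩)) := by
  set S := goodSet x a b with hS
  have haS : a ∈ S := (mem_goodSet x a b a).2 ⟨le_refl a, hab, min_le_left _ _, le_max_left _ _⟩
  have hbS : b ∈ S := (mem_goodSet x a b b).2 ⟨hab, le_refl b, min_le_right _ _, le_max_right _ _⟩
  have hk : 0 < S.card := Finset.card_pos.2 ⟨a, haS⟩
  have hne : S.Nonempty := ⟨a, haS⟩
  refine ⟨S.card, hk, S.orderEmbOfFin rfl, hcard, (S.orderEmbOfFin rfl).strictMono, ?_⟩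
  have hmin : S.min' hne = a := by
    refine le_antisymm (Finset.min'_le S a haS) (Finset.le_min' _ _ _ fun y hy => ?_)
    exact ((mem_goodSet x a b y).1 hy).1
  have hmax : S.max' hne = b := by
    refine le_antisymm (Finset.max'_le _ _ _ fun y hy => ((mem_goodSet x a b y).1 hy).2.1)
      (Finset.le_max' S b hbS)
  have h0 : S.orderEmbOfFin rfl ⟨0, hk⟩ = a := by
    rw [Finset.orderEmbOfFin_zero rfl hk]; exact hmin
  have hl : S.orderEmbOfFin rfl ⟨S.card - 1, Nat.sub_lt hk Nat.one_pos⟩ = b := by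
    rw [Finset.orderEmbOfFin_last rfl hk]; exact hmax
  intro j
  rw [h0, hl]
  have hj : S.orderEmbOfFin rfl j ∈ S := Finset.orderEmbOfFin_mem S rfl j
  have := (mem_goodSet x a b _).1 hj
  exact ⟨this.2.2.1, this.2.2.2⟩

/-- Any sequence of `n` pairwise distinct natural numbers has a subsequence of
length at least `n/5` all of whose elements lie in the closed interval whose
endpoints are the first and the last element of the subsequence. -/
theorem stmt_0 (n : ℕ) (hn : 1 ≤ n) (x : Fin n → ℕ) (hx : Function.Injective x) :
    ∃ (k : ℕ) (hk : 0 < k) (i : Fin k → Fin n),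
      n ≤ 5 * k ∧ StrictMono i ∧
      ∀ j : Fin k,
        min (x (i ⟨0, hk⟩)) (x (i ⟨k - 1, Nat.sub_lt hk Nat.one_pos⟩)) ≤ x (i j) ∧
        x (i j) ≤ max (x (i ⟨0, hk⟩)) (x (i ⟨k - 1, Nat.sub_lt hk Nat.one_pos⟩)) := by
  set z : Fin n := ⟨0, hn⟩ with hz
  set l : Fin n := ⟨n - 1, Nat.sub_lt hn Nat.one_pos⟩ with hl
  have hzle : ∀ i : Fin n, z ≤ i := fun i => by
    simp only [hz, Fin.le_def]; exact Nat.zero_le _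
  have hlle : ∀ i : Fin n, i ≤ l := fun i => by
    simp only [hl, Fin.le_def]; have := i.isLt; omega
  obtain ⟨p, _, hp⟩ := Finset.exists_min_image Finset.univ x ⟨z, Finset.mem_univ z⟩
  obtain ⟨q, _, hq⟩ := Finset.exists_max_image Finset.univ x ⟨z, Finset.mem_univ z⟩
  have hp' : ∀ i : Fin n, x p ≤ x i := fun i => hp i (Finset.mem_univ i)
  have hq' : ∀ i : Fin n, x i ≤ x q := fun i => hq i (Finset.mem_univ i)
  set a1 : Fin n := min p q with ha1
  set b1 : Fin n := max p q with hb1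
  have hab : a1 ≤ b1 := min_le_max
  -- the five sets cover everything
  have cover : ∀ i : Fin n, i ∈ goodSet x z a1 ∨ i ∈ goodSet x z b1 ∨ i ∈ goodSet x a1 b1
      ∨ i ∈ goodSet x a1 l ∨ i ∈ goodSet x b1 l := by
    intro i
    simp only [mem_goodSet]
    rcases le_total p q with hpq | hpq
    · have ea : a1 = p := min_eq_left hpq
      have eb : b1 = q := max_eq_right hpq
      rw [ea, eb]
      rcases le_total i p with h1 | h1
      · rcases le_total (x i) (x z) with h2 | h2
        · exact Or.inl ⟨hzle i, h1, le_trans (min_le_right _ _) (hp' i),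
            le_trans h2 (le_max_left _ _)⟩
        · exact Or.inr (Or.inl ⟨hzle i, le_trans h1 hpq,
            le_trans (min_le_left _ _) h2, le_trans (hq' i) (le_max_right _ _)⟩)
      · rcases le_total i q with h3 | h3
        · exact Or.inr (Or.inr (Or.inl ⟨h1, h3, le_trans (min_le_left _ _) (hp' i),
            le_trans (hq' i) (le_max_right _ _)⟩))
        · rcases le_total (x i) (x l) with h2 | h2
          · exact Or.inr (Or.inr (Or.inr (Or.inl ⟨le_trans hpq h3, hlle i,
              le_trans (min_le_left _ _) (hp' i), le_trans h2 (le_max_right _ _)⟩)))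
          · exact Or.inr (Or.inr (Or.inr (Or.inr ⟨h3, hlle i,
              le_trans (min_le_right _ _) h2, le_trans (hq' i) (le_max_left _ _)⟩)))
    · have ea : a1 = q := min_eq_right hpq
      have eb : b1 = p := max_eq_left hpq
      rw [ea, eb]
      rcases le_total i q with h1 | h1
      · rcases le_total (x i) (x z) with h2 | h2
        · exact Or.inr (Or.inl ⟨hzle i, le_trans h1 hpq,
            le_trans (min_le_right _ _) (hp' i), le_trans h2 (le_max_left _ _)⟩)
        · exact Or.inl ⟨hzle i, h1, le_trans (min_le_left _ _) h2,
            le_trans (hq' i) (le_max_right _ _)⟩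
      · rcases le_total i p with h3 | h3
        · exact Or.inr (Or.inr (Or.inl ⟨h1, h3, le_trans (min_le_right _ _) (hp' i),
            le_trans (hq' i) (le_max_left _ _)⟩))
        · rcases le_total (x i) (x l) with h2 | h2
          · exact Or.inr (Or.inr (Or.inr (Or.inr ⟨h3, hlle i,
              le_trans (min_le_left _ _) (hp' i), le_trans h2 (le_max_right _ _)⟩)))
          · exact Or.inr (Or.inr (Or.inr (Or.inl ⟨le_trans hpq h3, hlle i,
              le_trans (min_le_right _ _) h2, le_trans (hq' i) (le_max_left _ _)⟩)))
  set S1 := goodSet x z a1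
  set S2 := goodSet x z b1
  set S3 := goodSet x a1 b1
  set S4 := goodSet x a1 l
  set S5 := goodSet x b1 l
  have hsub : (Finset.univ : Finset (Fin n)) ⊆ S1 ∪ S2 ∪ S3 ∪ S4 ∪ S5 := by
    intro i _
    simp only [Finset.mem_union]
    rcases cover i with h | h | h | h | h <;> tauto
  have hcards : n ≤ S1.card + S2.card + S3.card + S4.card + S5.card := by
    have h1 : n = (Finset.univ : Finset (Fin n)).card := (Finset.card_fin n).symm
    have h2 := Finset.card_le_card hsub
    have h3 := Finset.card_union_le (S1 ∪ S2 ∪ S3 ∪ S4) S5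
    have h4 := Finset.card_union_le (S1 ∪ S2 ∪ S3) S4
    have h5 := Finset.card_union_le (S1 ∪ S2) S3
    have h6 := Finset.card_union_le S1 S2
    omega
  have hdisj : n ≤ 5 * S1.card ∨ n ≤ 5 * S2.card ∨ n ≤ 5 * S3.card ∨ n ≤ 5 * S4.card
      ∨ n ≤ 5 * S5.card := by omega
  rcases hdisj with h | h | h | h | h
  · exact aux x z a1 (hzle a1) h
  · exact aux x z b1 (hzle b1) h
  · exact aux x a1 b1 hab h
  · exact aux x a1 l (hlle a1) h
  · exact aux x b1 l (hlle b1) h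
end

section
/- Let A be a finite-dimensional vector space over Z/2 with basis e_1, ..., e_{n+k} (n ≥ 1, k ≥ 0). Let w_1, ..., w_n ∈ A be linearly independent and let W be their span. Let Z ⊆ A be a k-dimensional subspace with W ∩ Z = {0} and W ⊕ Z = A. Then there exists an injective function ι: {1,...,n} → {1,...,n+k} such that (1) for each j, the basis vector e_{ι(j)} appears with nonzero coefficient in the expansion of w_j in the basis e_1,...,e_{n+k}, and (2) Z is transverse to the span L of e_{ι(1)}, ..., e_{ι(n)}, i.e., L ∩ Z = {0} and L ⊕ Z = A. -/
open Matrix Finset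

theorem det_mul_expand {R : Type*} [CommRing R] {n m : Type*} [Fintype n] [Fintype m]
    [DecidableEq n] (C : Matrix n m R) (D : Matrix m n R) :
    (C * D).det = ∑ f : n → m, (∏ j, C j (f j)) * (D.submatrix f id).det := by
  have h1 : (C * D).det
      = (Matrix.detRowAlternating (R := R) (n := n)).toMultilinearMap
          (fun j => ∑ i, C j i • D i) := by
    congr 1
    ext j l
    simp [Matrix.mul_apply, Finset.sum_apply]
  rw [h1, MultilinearMap.map_sum]
  refine Finset.sum_congr rfl fun f _ => ?_
  rw [MultilinearMap.map_smul_univ]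
  simp only [smul_eq_mul]
  rfl


/-- Lemma B.2: given linearly independent `w₁,…,wₙ` in an `(n+k)`-dimensional
`𝔽₂`-vector space `A` with basis `e`, and a `k`-dimensional subspace `Z`
transverse to the span of the `wⱼ`, there is an injection `ι` such that
`e (ι j)` appears with nonzero coefficient in `wⱼ` and `Z` is transverse to
the span of the `e (ι j)`. -/
theorem stmt_1 (n k : ℕ) (hn : 1 ≤ n) (A : Type*) [AddCommGroup A] [Module (ZMod 2) A]
    (e : Module.Basis (Fin (n + k)) (ZMod 2) A)
    (w : Fin n → A) (hw : LinearIndependent (ZMod 2) w)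
    (Z : Submodule (ZMod 2) A) (hZ : Module.finrank (ZMod 2) Z = k)
    (hWZ : Submodule.span (ZMod 2) (Set.range w) ⊓ Z = ⊥)
    (hWZ' : Submodule.span (ZMod 2) (Set.range w) ⊔ Z = ⊤) :
    ∃ ι : Fin n → Fin (n + k), Function.Injective ι ∧
      (∀ j : Fin n, e.repr (w j) (ι j) ≠ 0) ∧
      Submodule.span (ZMod 2) (Set.range fun j : Fin n => e (ι j)) ⊓ Z = ⊥ ∧
      Submodule.span (ZMod 2) (Set.range fun j : Fin n => e (ι j)) ⊔ Z = ⊤ := by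
  classical
  set π := Z.mkQ with hπ
  -- the images of the `w j` are linearly independent in the quotient
  have vind : LinearIndependent (ZMod 2) (⇑π ∘ w) := by
    refine hw.map ?_
    rw [Submodule.ker_mkQ]
    exact disjoint_iff.mpr hWZ
  -- and they span the quotient
  have vspan : Submodule.span (ZMod 2) (Set.range (⇑π ∘ w)) = ⊤ := by
    have hmapZ : Submodule.map π Z = ⊥ := by
      rw [Submodule.eq_bot_iff]
      rintro x ⟨y, hy, rfl⟩
      simpa [π, Submodule.Quotient.mk_eq_zero] using hy
    calc Submodule.span (ZMod 2) (Set.range (⇑π ∘ w))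
        = Submodule.map π (Submodule.span (ZMod 2) (Set.range w)) := by
          rw [Submodule.map_span, Set.range_comp]
      _ = Submodule.map π (Submodule.span (ZMod 2) (Set.range w)) ⊔ Submodule.map π Z := by
          rw [hmapZ, sup_bot_eq]
      _ = Submodule.map π (Submodule.span (ZMod 2) (Set.range w) ⊔ Z) := (Submodule.map_sup _ _ _).symm
      _ = ⊤ := by rw [hWZ', Submodule.map_top, Submodule.range_mkQ]
  let v : Module.Basis (Fin n) (ZMod 2) (A ⧸ Z) := Module.Basis.mk vind vspan.ge
  have hv : ∀ j, v j = π (w j) := fun j => Module.Basis.mk_apply _ _ j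
  -- the two matrices
  set C : Matrix (Fin n) (Fin (n + k)) (ZMod 2) := fun j i => e.repr (w j) i with hC
  set D : Matrix (Fin (n + k)) (Fin n) (ZMod 2) := fun i l => v.repr (π (e i)) l with hD
  have hCD : C * D = 1 := by
    ext j l
    have hwj : π (w j) = ∑ i, e.repr (w j) i • π (e i) := by
      conv_lhs => rw [← e.sum_repr (w j)]
      rw [map_sum]
      simp
    rw [Matrix.mul_apply]
    have : ∑ i, C j i * D i l = v.repr (π (w j)) l := by
      rw [hwj, map_sum]
      simp [C, D, Finsupp.finset_sum_apply]
    rw [this, ← hv j, v.repr_self, Matrix.one_apply, Finsupp.single_apply]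
  have hdet : (C * D).det ≠ 0 := by rw [hCD, Matrix.det_one]; exact one_ne_zero
  rw [det_mul_expand] at hdet
  obtain ⟨f, -, hf⟩ := Finset.exists_ne_zero_of_sum_ne_zero hdet
  have hprod : ∏ j, C j (f j) ≠ 0 := left_ne_zero_of_mul hf
  have hsub : (D.submatrix f id).det ≠ 0 := right_ne_zero_of_mul hf
  -- injectivity
  have hinj : Function.Injective f := by
    intro i j hij
    by_contra hne
    exact hsub (Matrix.det_zero_of_row_eq hne (by funext l; simp [Matrix.submatrix_apply, hij]))
  -- the e (f j) images form a basis of the quotient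
  have hbasis : LinearIndependent (ZMod 2) (fun j => π (e (f j))) ∧
      Submodule.span (ZMod 2) (Set.range fun j => π (e (f j))) = ⊤ := by
    rw [Module.Basis.is_basis_iff_det v]
    rw [Module.Basis.det_apply]
    have : v.toMatrix (fun j => π (e (f j))) = (D.submatrix f id)ᵀ := by
      ext l j
      simp [Module.Basis.toMatrix_apply, D, Matrix.submatrix_apply]
      rfl
    rw [this, Matrix.det_transpose]
    exact isUnit_iff_ne_zero.mpr hsub
  obtain ⟨uind, uspan⟩ := hbasis
  refine ⟨f, hinj, ?_, ?_, ?_⟩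
  · intro j
    exact Finset.prod_ne_zero_iff.mp hprod j (Finset.mem_univ j)
  · rw [Submodule.eq_bot_iff]
    rintro x ⟨hxL, hxZ⟩
    obtain ⟨c, hc⟩ := (Submodule.mem_span_range_iff_exists_fun (ZMod 2)).mp hxL
    have hπx : π x = 0 := by simpa [π, Submodule.Quotient.mk_eq_zero] using hxZ
    have : ∑ j, c j • π (e (f j)) = 0 := by
      rw [← hπx, ← hc, map_sum]; simp
    have hc0 : ∀ j, c j = 0 := Fintype.linearIndependent_iff.mp uind c this
    rw [← hc]
    simp [hc0]
  · have hmapL : Submodule.map π (Submodule.span (ZMod 2) (Set.range fun j => e (f j))) = ⊤ := by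
      rw [Submodule.map_span, ← Set.range_comp]
      exact uspan
    have := congrArg (Submodule.comap π) hmapL
    rwa [Submodule.comap_map_eq, Submodule.ker_mkQ, Submodule.comap_top] at this
end

section
/- Let V and R be finite-dimensional vector spaces over Z/2 of dimensions n and m respectively, with bases {v_1,...,v_n} of V and {r_1,...,r_m} of R. Let F: V → R and G: R → V be linear maps such that G ∘ F is an isomorphism of V. Then there exist an injective map f: {1,...,n} → {1,...,m} and a bijective map g: {1,...,n} → {1,...,n} such that for each i ∈ {1,...,n}: the basis element r_{f(i)} appears (with nonzero coefficient) in F(v_i), and the basis element v_{g(i)} appears (with nonzero coefficient) in G(r_{f(i)}). -/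
/-- Combinatorial lemma: if `G ∘ F` is an isomorphism of `𝔽₂`-vector spaces with
fixed bases, one can choose an injection `f` and a bijection `g` such that
`r (f i)` appears in `F (v i)` and `v (g i)` appears in `G (r (f i))`. -/
theorem stmt_2 (n m : ℕ) (V R : Type*)
    [AddCommGroup V] [Module (ZMod 2) V] [AddCommGroup R] [Module (ZMod 2) R]
    (v : Module.Basis (Fin n) (ZMod 2) V) (r : Module.Basis (Fin m) (ZMod 2) R)
    (F : V →ₗ[ZMod 2] R) (G : R →ₗ[ZMod 2] V)
    (hGF : Function.Bijective (G.comp F)) :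
    ∃ f : Fin n → Fin m, Function.Injective f ∧
      ∃ g : Fin n → Fin n, Function.Bijective g ∧
        ∀ i : Fin n,
          r.repr (F (v i)) (f i) ≠ 0 ∧ v.repr (G (r (f i))) (g i) ≠ 0 := by
  classical
  set A := LinearMap.toMatrix v r F with hA
  set B := LinearMap.toMatrix r v G with hB
  -- det (B * A) ≠ 0
  have hBA : LinearMap.toMatrix v v (G.comp F) = B * A := LinearMap.toMatrix_comp v r v G F
  have hdet : (B * A).det ≠ 0 := by
    set e := LinearEquiv.ofBijective (G.comp F) hGF with he
    have h1 : LinearMap.toMatrix v v (e.symm : V →ₗ[ZMod 2] V) * (B * A) = 1 := by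
      rw [← hBA, ← LinearMap.toMatrix_comp v v v]
      have : (e.symm : V →ₗ[ZMod 2] V).comp (G.comp F) = LinearMap.id := by
        ext x
        exact e.symm_apply_apply x
      rw [this, LinearMap.toMatrix_id]
    exact (Matrix.isUnit_det_of_left_inverse h1).ne_zero
  -- expand the determinant
  have hexp : (B * A).det =
      ∑ σ : Equiv.Perm (Fin n), ∑ φ ∈ Fintype.piFinset (fun _ : Fin n => (Finset.univ : Finset (Fin m))),
        ∏ i : Fin n, B (σ i) (φ i) * A (φ i) i := by
    rw [Matrix.det_apply']
    refine Finset.sum_congr rfl fun σ _ => ?_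
    have hsign : ((Equiv.Perm.sign σ : ℤ) : ZMod 2) = 1 := by
      rcases Int.units_eq_one_or (Equiv.Perm.sign σ) with h | h <;> rw [h] <;> decide
    rw [hsign, one_mul]
    have : ∀ i : Fin n, (B * A) (σ i) i = ∑ j : Fin m, B (σ i) j * A j i := by
      intro i; rfl
    simp_rw [this]
    rw [Finset.prod_univ_sum]
  -- pair sum
  set term : Equiv.Perm (Fin n) × (Fin n → Fin m) → ZMod 2 :=
    fun p => ∏ i : Fin n, B (p.1 i) (p.2 i) * A (p.2 i) i with hterm
  have hexp2 : (B * A).det = ∑ p : Equiv.Perm (Fin n) × (Fin n → Fin m), term p := by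
    rw [hexp, ← Finset.sum_product']
    apply Finset.sum_congr
    · ext p; simp [Fintype.mem_piFinset]
    · intro p _; rfl
  -- split into injective/non-injective second components
  have hsplit : ∑ p : Equiv.Perm (Fin n) × (Fin n → Fin m), term p =
      (∑ p ∈ Finset.univ.filter (fun p : Equiv.Perm (Fin n) × (Fin n → Fin m) => Function.Injective p.2), term p)
      + ∑ p ∈ Finset.univ.filter (fun p : Equiv.Perm (Fin n) × (Fin n → Fin m) => ¬ Function.Injective p.2), term p := by
    rw [Finset.sum_filter_add_sum_filter_not]
  -- non-injective part vanishes via involution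
  have hnoninj : ∑ p ∈ Finset.univ.filter (fun p : Equiv.Perm (Fin n) × (Fin n → Fin m) => ¬ Function.Injective p.2), term p = 0 := by
    have pickex : ∀ p : Equiv.Perm (Fin n) × (Fin n → Fin m),
        p ∈ Finset.univ.filter (fun p : Equiv.Perm (Fin n) × (Fin n → Fin m) => ¬ Function.Injective p.2) →
        ∃ q : Fin n × Fin n, p.2 q.1 = p.2 q.2 ∧ q.1 ≠ q.2 := by
      intro p hp
      have h := (Finset.mem_filter.mp hp).2
      rw [Function.not_injective_iff] at h
      obtain ⟨a, b, hab, hne⟩ := h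
      exact ⟨(a, b), hab, hne⟩
    refine Finset.sum_involution
      (fun p hp => (p.1 * Equiv.swap (pickex p hp).choose.1 (pickex p hp).choose.2, p.2))
      ?_ ?_ ?_ ?_
    · -- f a + f (g a) = 0
      intro p hp
      obtain ⟨hq1, hq2⟩ := (pickex p hp).choose_spec
      set i := (pickex p hp).choose.1
      set i' := (pickex p hp).choose.2
      have hterm_eq : term (p.1 * Equiv.swap i i', p.2) = term p := by
        simp only [hterm]
        rw [Finset.prod_mul_distrib, Finset.prod_mul_distrib]
        congr 1
        have h1 : ∀ k : Fin n, B ((p.1 * Equiv.swap i i') k) (p.2 k)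
            = (fun k => B (p.1 k) (p.2 (Equiv.swap i i' k))) (Equiv.swap i i' k) := by
          intro k
          simp only [Equiv.Perm.mul_apply, Equiv.swap_apply_self]
        calc ∏ k, B ((p.1 * Equiv.swap i i') k) (p.2 k)
            = ∏ k, (fun k => B (p.1 k) (p.2 (Equiv.swap i i' k))) (Equiv.swap i i' k) := by
              exact Finset.prod_congr rfl fun k _ => h1 k
          _ = ∏ k, B (p.1 k) (p.2 (Equiv.swap i i' k)) := Equiv.prod_comp (Equiv.swap i i') (fun k => B (p.1 k) (p.2 (Equiv.swap i i' k)))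
          _ = ∏ k, B (p.1 k) (p.2 k) := by
              refine Finset.prod_congr rfl fun k _ => ?_
              congr 1
              rcases eq_or_ne k i with rfl | hk1
              · rw [Equiv.swap_apply_left]; exact hq1.symm ▸ hq1.symm
              rcases eq_or_ne k i' with rfl | hk2
              · rw [Equiv.swap_apply_right]; exact hq1
              · rw [Equiv.swap_apply_of_ne_of_ne hk1 hk2]
      rw [hterm_eq]
      exact CharTwo.add_self_eq_zero _
    · -- g a ≠ a when f a ≠ 0
      intro p hp _
      obtain ⟨hq1, hq2⟩ := (pickex p hp).choose_spec
      intro hcon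
      have : p.1 * Equiv.swap (pickex p hp).choose.1 (pickex p hp).choose.2 = p.1 :=
        congrArg Prod.fst hcon
      have hsw : Equiv.swap (pickex p hp).choose.1 (pickex p hp).choose.2 = 1 :=
        mul_left_cancel (a := p.1) (by rw [mul_one]; exact this)
      exact hq2 (Equiv.swap_eq_one_iff.mp hsw)
    · -- g a ∈ s
      intro p hp
      simpa using (Finset.mem_filter.mp hp).2
    · -- involutive
      intro p hp
      ext1
      · simp only
        rw [mul_assoc]
        norm_num [Equiv.swap_mul_self]
      · rfl
  -- hence some injective pair has nonzero term
  have hinj : ∑ p ∈ Finset.univ.filter (fun p : Equiv.Perm (Fin n) × (Fin n → Fin m) => Function.Injective p.2), term p ≠ 0 := by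
    intro h0
    rw [hexp2, hsplit, h0, hnoninj, add_zero] at hdet
    exact hdet rfl
  obtain ⟨p, hpmem, hpne⟩ := Finset.exists_ne_zero_of_sum_ne_zero hinj
  have hpinj : Function.Injective p.2 := (Finset.mem_filter.mp hpmem).2
  refine ⟨p.2, hpinj, p.1, p.1.bijective, fun i => ?_⟩
  have hfac : B (p.1 i) (p.2 i) * A (p.2 i) i ≠ 0 := by
    intro h
    exact hpne (Finset.prod_eq_zero (Finset.mem_univ i) h)
  constructor
  · have : A (p.2 i) i ≠ 0 := right_ne_zero_of_mul hfac
    rwa [hA, LinearMap.toMatrix_apply] at this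
  · have : B (p.1 i) (p.2 i) ≠ 0 := left_ne_zero_of_mul hfac
    rwa [hB, LinearMap.toMatrix_apply] at this
end
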